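/- Let H be a complex Hilbert space, let A and B be bounded self-adjoint operators on H, and let f : ℝ → ℝ be Lipschitz on a set containing the spectra of both A and B (in particular f is continuous there, so f(A) and f(B) are defined by the continuous functional calculus). If A − B is Hilbert–Schmidt, then f(A) − f(B) is Hilbert–Schmidt. -/

import Mathlib

noncomputable section

universe u v w

/-- A bounded linear operator between complex Hilbert spaces is **Hilbert–Schmidt** if for some
(equivalently, every) Hilbert orthonormal basis `(e i)` of its domain, the family
`i ↦ ‖T (e i)‖ ^ 2` is summable. -/
def IsHilbertSchmidt {E : Type u} {F : Type v} [NormedAddCommGroup E] [InnerProductSpace ℂ E]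
    [NormedAddCommGroup F] [InnerProductSpace ℂ F] (T : E →L[ℂ] F) : Prop :=
  ∃ (ι : Type u) (b : HilbertBasis ι ℂ E), Summable fun i => ‖T (b i)‖ ^ 2

/-!
In finite dimensions, diagonalise the self-adjoint operators `X` and `Y` in orthonormal eigenbases
`(v j)` and `(w k)`, with eigenvalues `λ j` and `μ k`. Then
`⟪w k, (g(X) - g(Y)) (v j)⟫ = (g (λ j) - g (μ k)) ⟪w k, v j⟫` and
`⟪w k, (X - Y) (v j)⟫ = (λ j - μ k) ⟪w k, v j⟫`, so Parseval in `(w k)`, together with the basis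
independence of `∑ i, ‖T (e i)‖ ^ 2 = re tr (T† T)`, gives `‖g(X) - g(Y)‖_HS ≤ K ‖X - Y‖_HS` for
a `K`-Lipschitz `g`.

For general `A` and `B`, let `b` be a Hilbert basis in which `A - B` is Hilbert–Schmidt and
compress `A` and `B` to the span of finitely many `b i`. Along the finite sets of indices, `g` of
the compressions converges strongly to `g(A)` and `g(B)`: for polynomials because the compressions
are uniformly bounded and converge strongly, and for continuous `g` by approximating `g` uniformly
by one polynomial on `[-‖A‖, ‖A‖]`, which contains the spectra of `A` and of all its compressions.
So every finite partial sum of `∑ i, ‖(g(A) - g(B)) (b i)‖ ^ 2` is at most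
`K ^ 2 * ∑ i, ‖(A - B) (b i)‖ ^ 2`. Finally, `f` is replaced by a Lipschitz extension `g` of `f|s`
to `ℝ`, which has the same functional calculus at `A` and `B`.
-/

open Filter Topology Polynomial
open scoped InnerProductSpace

lemma spectrum_real_subset_Icc_norm {A : Type*} [CStarAlgebra A] (a : A) :
    spectrum ℝ a ⊆ Set.Icc (-‖a‖) ‖a‖ := by
  intro x hx
  have h1 : ‖(1 : A)‖ ≤ 1 := by
    rcases subsingleton_or_nontrivial A with h | h
    · simp [Subsingleton.elim (1 : A) 0]
    · simp
  have h := (spectrum.norm_le_norm_mul_of_mem hx).trans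
    (mul_le_of_le_one_right (norm_nonneg a) h1)
  exact abs_le.mp (by simpa using h)

lemma norm_cfc_sub_aeval_le {A : Type*} [CStarAlgebra A] {a : A} (ha : IsSelfAdjoint a)
    {M ε : ℝ} (haM : ‖a‖ ≤ M) {g : ℝ → ℝ} (hg : ContinuousOn g (Set.Icc (-M) M)) {p : ℝ[X]}
    (hp : ∀ x ∈ Set.Icc (-M) M, |p.eval x - g x| < ε) :
    ‖cfc g a - aeval a p‖ ≤ ε := by
  have hspec : spectrum ℝ a ⊆ Set.Icc (-M) M :=
    (spectrum_real_subset_Icc_norm a).trans (Set.Icc_subset_Icc (neg_le_neg haM) haM)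
  have hM : (0 : ℝ) ∈ Set.Icc (-M) M := by
    constructor <;> linarith [norm_nonneg a]
  rw [← cfc_polynomial p a, ← cfc_sub g p.eval a (hg.mono hspec)]
  refine norm_cfc_le ((abs_nonneg _).trans (hp 0 hM).le) fun x hx => ?_
  rw [Real.norm_eq_abs, abs_sub_comm]
  exact (hp x (hspec hx)).le

namespace ContinuousLinearMap

variable {𝕜 E F G : Type*} [NontriviallyNormedField 𝕜] [SeminormedAddCommGroup E]
  [NormedSpace 𝕜 E] [SeminormedAddCommGroup F] [NormedSpace 𝕜 F] [SeminormedAddCommGroup G]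
  [NormedSpace 𝕜 G]

lemma norm_comp_le_of_norm_le_one_left {S : F →L[𝕜] G} (hS : ‖S‖ ≤ 1) (T : E →L[𝕜] F) :
    ‖S ∘L T‖ ≤ ‖T‖ :=
  (opNorm_comp_le _ _).trans (mul_le_of_le_one_left (norm_nonneg T) hS)

lemma norm_comp_le_of_norm_le_one_right (T : F →L[𝕜] G) {S : E →L[𝕜] F} (hS : ‖S‖ ≤ 1) :
    ‖T ∘L S‖ ≤ ‖T‖ :=
  (opNorm_comp_le _ _).trans (mul_le_of_le_one_right (norm_nonneg T) hS)

lemma norm_apply_le_of_norm_le_one {S : E →L[𝕜] F} (hS : ‖S‖ ≤ 1) (x : E) : ‖S x‖ ≤ ‖x‖ :=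
  (S.le_of_opNorm_le hS x).trans_eq (one_mul _)

lemma tendsto_apply_apply_of_norm_le {ι : Type*} {l : Filter ι} {T : ι → E →L[𝕜] F} {C : ℝ}
    (hC : ∀ t, ‖T t‖ ≤ C) {y : ι → E} {y₀ : E} {z : F}
    (hT : Tendsto (fun t => T t y₀) l (𝓝 z)) (hy : Tendsto y l (𝓝 y₀)) :
    Tendsto (fun t => T t (y t)) l (𝓝 z) := by
  have h₀ : Tendsto (fun t => T t (y t - y₀)) l (𝓝 0) := by
    refine squeeze_zero_norm (fun t => (T t).le_of_opNorm_le (hC t) _) ?_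
    simpa using (hy.sub_const y₀).norm.const_mul C
  simpa using h₀.add hT

end ContinuousLinearMap

lemma ContinuousLinearMap.sum_sq_norm_apply_eq_re_trace {𝕜 E F ι : Type*} [RCLike 𝕜]
    [NormedAddCommGroup E] [InnerProductSpace 𝕜 E] [CompleteSpace E] [FiniteDimensional 𝕜 E]
    [NormedAddCommGroup F] [InnerProductSpace 𝕜 F] [CompleteSpace F] [Fintype ι]
    (T : E →L[𝕜] F) (e : OrthonormalBasis ι 𝕜 E) :
    ∑ i, ‖T (e i)‖ ^ 2 = RCLike.re (LinearMap.trace 𝕜 E (T.adjoint ∘L T)) := by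
  rw [LinearMap.trace_eq_sum_inner _ e, map_sum]
  congr 1 with i
  simp [adjoint_inner_right]

section Eigenvectors

variable {E : Type*} [NormedAddCommGroup E] [InnerProductSpace ℂ E]

lemma aeval_apply_of_apply_eq_smul {T : E →L[ℂ] E} {v : E} {μ : ℝ} (hv : T v = (μ : ℂ) • v)
    (p : ℝ[X]) : aeval T p v = ((p.eval μ : ℝ) : ℂ) • v := by
  induction p using Polynomial.induction_on with
  | C a => simp [Algebra.algebraMap_eq_smul_one, Complex.coe_smul]
  | add p q hp hq => simp [hp, hq, add_smul]
  | monomial n a ih =>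
    rw [pow_succ, ← mul_assoc, map_mul, aeval_X, mul_apply_eq_comp, hv, map_smul, ih,
      smul_smul, eval_mul_X, Complex.ofReal_mul, mul_comm]

variable [CompleteSpace E]

lemma norm_cfc_apply_sub_aeval_apply_le {T : E →L[ℂ] E} (hT : IsSelfAdjoint T) {M ε : ℝ}
    (hTM : ‖T‖ ≤ M) {g : ℝ → ℝ} (hg : ContinuousOn g (Set.Icc (-M) M)) {p : ℝ[X]}
    (hp : ∀ x ∈ Set.Icc (-M) M, |p.eval x - g x| < ε) (y : E) :
    ‖cfc g T y - aeval T p y‖ ≤ ε * ‖y‖ :=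
  (cfc g T - aeval T p).le_of_opNorm_le (norm_cfc_sub_aeval_le hT hTM hg hp) y

lemma cfc_apply_of_apply_eq_smul {T : E →L[ℂ] E} (hT : IsSelfAdjoint T) {g : ℝ → ℝ}
    (hg : Continuous g) {v : E} {μ : ℝ} (hv : T v = (μ : ℂ) • v) :
    cfc g T v = (g μ : ℂ) • v := by
  -- `[-M, M]` contains both the spectrum of `T` and `μ`
  set M := max ‖T‖ |μ|
  refine eq_of_forall_dist_le fun ε hε => ?_
  set δ := ε / (2 * ‖v‖ + 1)
  have hδ : 0 < δ := div_pos hε (by positivity)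
  have hδv : δ * (2 * ‖v‖ + 1) = ε := div_mul_cancel₀ _ (by positivity)
  obtain ⟨p, hp⟩ := exists_polynomial_near_of_continuousOn (-M) M g hg.continuousOn δ hδ
  calc dist (cfc g T v) ((g μ : ℂ) • v)
      = ‖(cfc g T v - aeval T p v) + ((p.eval μ - g μ : ℝ) : ℂ) • v‖ := by
        rw [dist_eq_norm, aeval_apply_of_apply_eq_smul hv, Complex.ofReal_sub, sub_smul]
        abel_nf
    _ ≤ δ * ‖v‖ + δ * ‖v‖ := by
        refine norm_add_le_of_le (norm_cfc_apply_sub_aeval_apply_le hT (le_max_left _ _)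
          hg.continuousOn hp v) ?_
        rw [norm_smul, Complex.norm_real, Real.norm_eq_abs]
        gcongr
        exact (hp μ (abs_le.mp (le_max_right _ _))).le
    _ ≤ ε := by nlinarith

lemma inner_sub_apply_of_apply_eq_smul {S R : E →L[ℂ] E} (hR : IsSelfAdjoint R) {v w : E}
    {α β : ℝ} (hv : S v = (α : ℂ) • v) (hw : R w = (β : ℂ) • w) :
    ⟪w, (S - R) v⟫_ℂ = ((α - β : ℝ) : ℂ) * ⟪w, v⟫_ℂ := by
  rw [sub_apply, inner_sub_right, hv, ← R.adjoint_inner_left, hR.adjoint_eq, hw,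
    inner_smul_right, inner_smul_left, Complex.conj_ofReal, Complex.ofReal_sub, sub_mul]

variable [FiniteDimensional ℂ E]

lemma IsSelfAdjoint.exists_orthonormalBasis_apply_eq_smul {X : E →L[ℂ] E}
    (hX : IsSelfAdjoint X) :
    ∃ (n : ℕ) (v : OrthonormalBasis (Fin n) ℂ E) (μ : Fin n → ℝ),
      ∀ j, X (v j) = (μ j : ℂ) • v j :=
  ⟨_, hX.isSymmetric.eigenvectorBasis rfl, hX.isSymmetric.eigenvalues rfl,
    hX.isSymmetric.apply_eigenvectorBasis rfl⟩

lemma sq_norm_cfc_sub_cfc_apply_le {X Y : E →L[ℂ] E} (hX : IsSelfAdjoint X)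
    (hY : IsSelfAdjoint Y) {g : ℝ → ℝ} {K : NNReal} (hg : LipschitzWith K g) {v : E} {μ : ℝ}
    (hv : X v = (μ : ℂ) • v) :
    ‖(cfc g X - cfc g Y) v‖ ^ 2 ≤ K ^ 2 * ‖(X - Y) v‖ ^ 2 := by
  obtain ⟨n, w, ν, hw⟩ := hY.exists_orthonormalBasis_apply_eq_smul
  rw [← w.sum_sq_norm_inner_right, ← w.sum_sq_norm_inner_right, Finset.mul_sum]
  refine Finset.sum_le_sum fun k _ => ?_
  rw [inner_sub_apply_of_apply_eq_smul (cfc_predicate g Y)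
      (cfc_apply_of_apply_eq_smul hX hg.continuous hv)
      (cfc_apply_of_apply_eq_smul hY hg.continuous (hw k)),
    inner_sub_apply_of_apply_eq_smul hY hv (hw k), norm_mul, norm_mul, Complex.norm_real,
    Complex.norm_real, ← dist_eq_norm, ← dist_eq_norm, mul_pow, mul_pow, ← mul_assoc]
  gcongr ?_ * _
  rw [← mul_pow]
  gcongr
  exact hg.dist_le_mul μ (ν k)

theorem sum_sq_norm_cfc_sub_cfc_apply_le {ι : Type*} [Fintype ι] {X Y : E →L[ℂ] E}
    (hX : IsSelfAdjoint X) (hY : IsSelfAdjoint Y) {g : ℝ → ℝ} {K : NNReal}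
    (hg : LipschitzWith K g) (e : OrthonormalBasis ι ℂ E) :
    ∑ i, ‖(cfc g X - cfc g Y) (e i)‖ ^ 2 ≤ K ^ 2 * ∑ i, ‖(X - Y) (e i)‖ ^ 2 := by
  obtain ⟨n, v, μ, hv⟩ := hX.exists_orthonormalBasis_apply_eq_smul
  rw [ContinuousLinearMap.sum_sq_norm_apply_eq_re_trace _ e,
    ← ContinuousLinearMap.sum_sq_norm_apply_eq_re_trace _ v,
    ContinuousLinearMap.sum_sq_norm_apply_eq_re_trace (X - Y) e,
    ← ContinuousLinearMap.sum_sq_norm_apply_eq_re_trace (X - Y) v, Finset.mul_sum]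
  exact Finset.sum_le_sum fun j _ => sq_norm_cfc_sub_cfc_apply_le hX hY hg (hv j)

end Eigenvectors

section Compression

variable {𝕜 H : Type*} [RCLike 𝕜] [NormedAddCommGroup H] [InnerProductSpace 𝕜 H]
  [CompleteSpace H]

lemma ContinuousLinearMap.norm_adjoint_apply_le {F : Type*} [NormedAddCommGroup F]
    [InnerProductSpace 𝕜 F] [CompleteSpace F] {S : F →L[𝕜] H} (hS : ‖S‖ ≤ 1) (x : H) :
    ‖S.adjoint x‖ ≤ ‖x‖ :=
  S.adjoint.norm_apply_le_of_norm_le_one (by rwa [LinearIsometryEquiv.norm_map]) x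

lemma ContinuousLinearMap.norm_adjoint_comp_comp_le {F : Type*} [NormedAddCommGroup F]
    [InnerProductSpace 𝕜 F] [CompleteSpace F] {S : F →L[𝕜] H} (hS : ‖S‖ ≤ 1) (A : H →L[𝕜] H) :
    ‖S.adjoint ∘L A ∘L S‖ ≤ ‖A‖ :=
  (S.adjoint.norm_comp_le_of_norm_le_one_left (by rwa [LinearIsometryEquiv.norm_map]) _).trans
    (A.norm_comp_le_of_norm_le_one_right hS)

lemma ContinuousLinearMap.norm_comp_adjoint_comp_le {F : Type*} [NormedAddCommGroup F]
    [InnerProductSpace 𝕜 F] [CompleteSpace F] {S : F →L[𝕜] H} (hS : ‖S‖ ≤ 1) (A : H →L[𝕜] H) :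
    ‖S ∘L S.adjoint ∘L A‖ ≤ ‖A‖ :=
  (S.norm_comp_le_of_norm_le_one_left hS _).trans
    (S.adjoint.norm_comp_le_of_norm_le_one_left (by rwa [LinearIsometryEquiv.norm_map]) A)

variable {ι : Type*} {E : ι → Type*} [∀ t, NormedAddCommGroup (E t)]
  [∀ t, InnerProductSpace 𝕜 (E t)] [∀ t, CompleteSpace (E t)] {l : Filter ι}
  {J : ∀ t, E t →L[𝕜] H}

lemma tendsto_adjoint_comp_comp_pow_apply (hJ : ∀ t, ‖J t‖ ≤ 1)
    (hJJ : ∀ x, Tendsto (fun t => J t ((J t).adjoint x)) l (𝓝 x)) (A : H →L[𝕜] H) (n : ℕ)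
    (x : H) :
    Tendsto (fun t => J t ((((J t).adjoint ∘L A ∘L J t) ^ n) ((J t).adjoint x))) l
      (𝓝 ((A ^ n) x)) := by
  induction n with
  | zero => simpa using hJJ x
  | succ n ih =>
    simp only [pow_succ', mul_apply_eq_comp]
    exact ContinuousLinearMap.tendsto_apply_apply_of_norm_le
      (T := fun t => J t ∘L (J t).adjoint ∘L A)
      (fun t => (J t).norm_comp_adjoint_comp_le (hJ t) A) (hJJ _) ih

end Compression

section ComplexCompression

variable {ι H : Type*} [NormedAddCommGroup H] [InnerProductSpace ℂ H] [CompleteSpace H]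
  {E : ι → Type*} [∀ t, NormedAddCommGroup (E t)] [∀ t, InnerProductSpace ℂ (E t)]
  [∀ t, CompleteSpace (E t)] {l : Filter ι} {J : ∀ t, E t →L[ℂ] H}

lemma tendsto_aeval_adjoint_comp_comp_apply (hJ : ∀ t, ‖J t‖ ≤ 1)
    (hJJ : ∀ x, Tendsto (fun t => J t ((J t).adjoint x)) l (𝓝 x)) (A : H →L[ℂ] H) (p : ℝ[X])
    (x : H) :
    Tendsto (fun t => J t (aeval ((J t).adjoint ∘L A ∘L J t) p ((J t).adjoint x))) l
      (𝓝 (aeval A p x)) := by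
  induction p using Polynomial.induction_on' with
  | add p q hp hq => simpa only [map_add, add_apply] using hp.add hq
  | monomial n a =>
    simpa [aeval_monomial, Algebra.algebraMap_eq_smul_one, smul_mul_assoc] using
      (tendsto_adjoint_comp_comp_pow_apply hJ hJJ A n x).const_smul a

theorem tendsto_cfc_adjoint_comp_comp_apply (hJ : ∀ t, ‖J t‖ ≤ 1)
    (hJJ : ∀ x, Tendsto (fun t => J t ((J t).adjoint x)) l (𝓝 x)) {A : H →L[ℂ] H}
    (hA : IsSelfAdjoint A) {g : ℝ → ℝ} (hg : Continuous g) (x : H) :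
    Tendsto (fun t => J t (cfc g ((J t).adjoint ∘L A ∘L J t) ((J t).adjoint x))) l
      (𝓝 (cfc g A x)) := by
  refine Metric.tendsto_nhds.mpr fun ε hε => ?_
  set δ := ε / (3 * (‖x‖ + 1))
  have hδx : δ * ‖x‖ < ε / 3 := by
    rw [div_mul_eq_mul_div, div_lt_div_iff₀ (by positivity) (by positivity)]
    nlinarith [norm_nonneg x]
  obtain ⟨p, hp⟩ := exists_polynomial_near_of_continuousOn (-‖A‖) ‖A‖ g hg.continuousOn δ
    (by positivity)
  have hA' : dist (aeval A p x) (cfc g A x) ≤ δ * ‖x‖ := by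
    rw [dist_comm, dist_eq_norm]
    exact norm_cfc_apply_sub_aeval_apply_le hA le_rfl hg.continuousOn hp x
  filter_upwards [Metric.tendsto_nhds.mp (tendsto_aeval_adjoint_comp_comp_apply hJ hJJ A p x)
    (ε / 3) (by positivity)] with t ht
  set C := (J t).adjoint ∘L A ∘L J t
  set y := (J t).adjoint x
  have hC : dist (J t (cfc g C y)) (J t (aeval C p y)) ≤ δ * ‖x‖ := by
    rw [dist_eq_norm, ← map_sub]
    calc ‖J t (cfc g C y - aeval C p y)‖
        ≤ ‖cfc g C y - aeval C p y‖ := (J t).norm_apply_le_of_norm_le_one (hJ t) _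
      _ ≤ δ * ‖y‖ := norm_cfc_apply_sub_aeval_apply_le (hA.adjoint_conj (J t))
          ((J t).norm_adjoint_comp_comp_le (hJ t) A) hg.continuousOn hp y
      _ ≤ δ * ‖x‖ := by
          gcongr
          exact (J t).norm_adjoint_apply_le (hJ t) x
  calc dist (J t (cfc g C y)) (cfc g A x)
      ≤ dist (J t (cfc g C y)) (J t (aeval C p y)) + dist (J t (aeval C p y)) (aeval A p x)
        + dist (aeval A p x) (cfc g A x) := dist_triangle4 _ _ _ _
    _ < ε / 3 + ε / 3 + ε / 3 := by gcongr <;> linarith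
    _ = ε := by ring

end ComplexCompression

namespace HilbertBasis

variable {ι 𝕜 H : Type*} [RCLike 𝕜] [NormedAddCommGroup H] [InnerProductSpace 𝕜 H]
  [DecidableEq H] (b : HilbertBasis ι 𝕜 H)

def finsetIsometry (F : Finset ι) : EuclideanSpace 𝕜 F →ₗᵢ[𝕜] H :=
  (Submodule.span 𝕜 (F.image b : Set H)).subtypeₗᵢ.comp
    (OrthonormalBasis.span b.orthonormal F).repr.symm.toLinearIsometry

lemma finsetIsometry_basisFun (F : Finset ι) (i : F) :
    b.finsetIsometry F (EuclideanSpace.basisFun F 𝕜 i) = b i := by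
  classical
  simp [finsetIsometry, EuclideanSpace.basisFun_apply]

variable [CompleteSpace H]

lemma finsetIsometry_adjoint_apply (F : Finset ι) (x : H) :
    (b.finsetIsometry F).toContinuousLinearMap
        ((b.finsetIsometry F).toContinuousLinearMap.adjoint x) =
      (Submodule.span 𝕜 (F.image b : Set H)).starProjection x := by
  set V := Submodule.span 𝕜 (F.image b : Set H)
  set R := (OrthonormalBasis.span b.orthonormal F).repr.symm
  have hJ : (b.finsetIsometry F).toContinuousLinearMap =
      V.subtypeL ∘L (R : EuclideanSpace 𝕜 F →L[𝕜] V) := rfl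
  rw [hJ, ContinuousLinearMap.adjoint_comp, LinearIsometryEquiv.adjoint_eq_symm,
    Submodule.adjoint_subtypeL]
  change V.subtypeL (R (R.symm (V.orthogonalProjectionOnto x))) = _
  rw [LinearIsometryEquiv.apply_symm_apply]
  rfl

lemma tendsto_finsetIsometry_adjoint_apply (x : H) :
    Tendsto (fun F => (b.finsetIsometry F).toContinuousLinearMap
      ((b.finsetIsometry F).toContinuousLinearMap.adjoint x)) atTop (𝓝 x) := by
  simp_rw [b.finsetIsometry_adjoint_apply]
  refine Submodule.starProjection_tendsto_self _ (fun F G h => Submodule.span_mono ?_) x ?_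
  · exact Finset.coe_subset.mpr (Finset.image_subset_image h)
  · rw [← b.dense_span]
    refine Submodule.topologicalClosure_mono (Submodule.span_le.mpr ?_)
    rintro _ ⟨i, rfl⟩
    exact Submodule.mem_iSup_of_mem {i} (Submodule.subset_span (by simp))

end HilbertBasis

lemma HilbertBasis.sum_sq_norm_cfc_finsetIsometry_sub_le {ι H : Type*} [NormedAddCommGroup H]
    [InnerProductSpace ℂ H] [CompleteSpace H] [DecidableEq H] (b : HilbertBasis ι ℂ H)
    {A B : H →L[ℂ] H} (hA : IsSelfAdjoint A) (hB : IsSelfAdjoint B) {g : ℝ → ℝ} {K : NNReal}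
    (hg : LipschitzWith K g) (F : Finset ι) :
    let J := (b.finsetIsometry F).toContinuousLinearMap
    ∑ i ∈ F, ‖J (cfc g (J.adjoint ∘L A ∘L J) (J.adjoint (b i)))
        - J (cfc g (J.adjoint ∘L B ∘L J) (J.adjoint (b i)))‖ ^ 2
      ≤ K ^ 2 * ∑ i ∈ F, ‖(A - B) (b i)‖ ^ 2 := by
  intro J
  set e := EuclideanSpace.basisFun F ℂ
  have hJe (i : F) : J (e i) = b i := b.finsetIsometry_basisFun F i
  have hJb (i : F) : J.adjoint (b i) = e i := by
    rw [← hJe, ← ContinuousLinearMap.comp_apply, LinearIsometry.adjoint_comp_self]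
    rfl
  calc ∑ i ∈ F, ‖J (cfc g (J.adjoint ∘L A ∘L J) (J.adjoint (b i)))
        - J (cfc g (J.adjoint ∘L B ∘L J) (J.adjoint (b i)))‖ ^ 2
      = ∑ i : F, ‖(cfc g (J.adjoint ∘L A ∘L J) - cfc g (J.adjoint ∘L B ∘L J)) (e i)‖ ^ 2 := by
        rw [← Finset.sum_coe_sort F]
        refine Finset.sum_congr rfl fun i _ => ?_
        rw [hJb, ← map_sub, sub_apply]
        exact congrArg (· ^ 2) ((b.finsetIsometry F).norm_map _)
    _ ≤ K ^ 2 * ∑ i : F, ‖(J.adjoint ∘L A ∘L J - J.adjoint ∘L B ∘L J) (e i)‖ ^ 2 :=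
        sum_sq_norm_cfc_sub_cfc_apply_le (hA.adjoint_conj J) (hB.adjoint_conj J) hg e
    _ ≤ K ^ 2 * ∑ i ∈ F, ‖(A - B) (b i)‖ ^ 2 := by
        rw [← Finset.sum_coe_sort F]
        gcongr with i
        calc ‖(J.adjoint ∘L A ∘L J - J.adjoint ∘L B ∘L J) (e i)‖
            = ‖J.adjoint ((A - B) (b i))‖ := by
              simp only [sub_apply, ContinuousLinearMap.comp_apply, hJe, map_sub]
          _ ≤ ‖(A - B) (b i)‖ :=
              J.norm_adjoint_apply_le (b.finsetIsometry F).norm_toContinuousLinearMap_le _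

theorem birmanSolomyak_hilbertSchmidt {H : Type u} [NormedAddCommGroup H]
    [InnerProductSpace ℂ H] [CompleteSpace H]
    (A B : H →L[ℂ] H) (hA : IsSelfAdjoint A) (hB : IsSelfAdjoint B)
    (s : Set ℝ) (hAs : spectrum ℝ A ⊆ s) (hBs : spectrum ℝ B ⊆ s)
    (f : ℝ → ℝ) (K : NNReal) (hf : LipschitzOnWith K f s)
    (hHS : IsHilbertSchmidt (A - B)) :
    IsHilbertSchmidt (cfc f A - cfc f B) := by
  obtain ⟨g, hg, hfg⟩ := hf.extend_real
  rw [cfc_congr (hfg.mono hAs), cfc_congr (hfg.mono hBs)]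
  obtain ⟨ι, b, hsum⟩ := hHS
  classical
  refine ⟨ι, b, summable_of_sum_le (c := K ^ 2 * ∑' i, ‖(A - B) (b i)‖ ^ 2)
    (fun _ => by positivity) fun G => ?_⟩
  have hlim (C : H →L[ℂ] H) (hC : IsSelfAdjoint C) (x : H) :=
    tendsto_cfc_adjoint_comp_comp_apply
      (fun F => (b.finsetIsometry F).norm_toContinuousLinearMap_le)
      b.tendsto_finsetIsometry_adjoint_apply hC hg.continuous x
  refine le_of_tendsto (tendsto_finsetSum G fun i _ =>
    ((hlim A hA (b i)).sub (hlim B hB (b i))).norm.pow 2) ?_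
  filter_upwards [eventually_ge_atTop G] with F hGF
  calc _ ≤ _ := Finset.sum_le_sum_of_subset_of_nonneg hGF fun _ _ _ => by positivity
    _ ≤ K ^ 2 * ∑ i ∈ F, ‖(A - B) (b i)‖ ^ 2 :=
        b.sum_sq_norm_cfc_finsetIsometry_sub_le hA hB hg F
    _ ≤ K ^ 2 * ∑' i, ‖(A - B) (b i)‖ ^ 2 := by
        gcongr
        exact hsum.sum_le_tsum F fun _ _ => by positivity
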